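/- arXiv:1706.07571 — 3 statements merged into one kernel-verified Lean document; each statement's English description precedes it below -/
import Mathlib

section
/- If a Stieltjes moment sequence (a_n) has at most exponential growth (a_n ≤ M R^n for some M, R), then the exponential growth rate limsup a_n^{1/n} equals the supremum of the support of the representing measure μ on [0,∞). -/
/-!
If `μ` lives on `[0, s]` with `s = sup supp μ`, then `t ^ n * μ [t, ∞) ≤ ∫ x ^ n dμ ≤ s ^ n * μ ℝ`
for every `0 ≤ t < s`, and `μ [t, ∞) > 0`. Taking `n`-th roots, the constants disappear in the
limit, so `(∫ x ^ n dμ) ^ (1 / n)` actually converges to `s`. The same lower estimate, compared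
with `a n ≤ M R ^ n`, shows that the support lies in `[0, R]`, so `s` is finite.
-/

open MeasureTheory Filter Topology Set

lemma tendsto_pow_mul_rpow_one_div {s c : ℝ} (hs : 0 ≤ s) (hc : 0 < c) :
    Tendsto (fun n : ℕ => (s ^ n * c) ^ (1 / (n : ℝ))) atTop (𝓝 s) := by
  have hroot : Tendsto (fun n : ℕ => c ^ (1 / (n : ℝ))) atTop (𝓝 1) := by
    simpa using tendsto_const_nhds.rpow (tendsto_one_div_atTop_nhds_zero_nat (𝕜 := ℝ))
      (Or.inl hc.ne')
  have hlim : Tendsto (fun n : ℕ => s * c ^ (1 / (n : ℝ))) atTop (𝓝 s) := by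
    simpa using tendsto_const_nhds.mul hroot
  refine hlim.congr' ?_
  filter_upwards [eventually_ge_atTop 1] with n hn
  have hn' : (n : ℝ) ≠ 0 := Nat.cast_ne_zero.2 (by omega)
  rw [Real.mul_rpow (pow_nonneg hs n) hc.le, ← Real.rpow_natCast, ← Real.rpow_mul hs,
    mul_one_div_cancel hn', Real.rpow_one]

lemma tendsto_rpow_one_div_of_pow_bounds {a : ℕ → ℝ} {s C : ℝ} (ha : ∀ n, 0 ≤ a n)
    (hs : 0 ≤ s) (hC : 0 < C) (hupper : ∀ n, a n ≤ s ^ n * C)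
    (hlower : ∀ t, 0 ≤ t → t < s → ∃ c > 0, ∀ n, t ^ n * c ≤ a n) :
    Tendsto (fun n : ℕ => a n ^ (1 / (n : ℝ))) atTop (𝓝 s) := by
  refine tendsto_order.2 ⟨fun u hus => ?_, fun u hsu => ?_⟩
  · rcases lt_or_ge u 0 with hu | hu
    · exact .of_forall fun n => hu.trans_le (Real.rpow_nonneg (ha n) _)
    obtain ⟨t, hut, hts⟩ := exists_between hus
    have ht : 0 ≤ t := hu.trans hut.le
    obtain ⟨c, hc, hlow⟩ := hlower t ht hts
    filter_upwards [(tendsto_pow_mul_rpow_one_div ht hc).eventually_const_lt hut]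
      with n hn
    exact hn.trans_le (Real.rpow_le_rpow (by positivity) (hlow n) (by positivity))
  · filter_upwards [(tendsto_pow_mul_rpow_one_div hs hC).eventually_lt_const hsu] with n hn
    exact (Real.rpow_le_rpow (ha n) (hupper n) (by positivity)).trans_lt hn

namespace MeasureTheory.Measure

lemma support_eq_setOf_measure_Ioo_pos (μ : Measure ℝ) :
    μ.support = {x : ℝ | ∀ ε > 0, 0 < μ (Ioo (x - ε) (x + ε))} := by
  ext x
  simp [Metric.nhds_basis_ball.mem_measureSupport, Real.ball_eq_Ioo]

variable {μ : Measure ℝ} [IsFiniteMeasure μ]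

lemma measureReal_Ici_pos_of_lt_mem_support {x t : ℝ}
    (hx : x ∈ μ.support) (htx : t < x) : 0 < μ.real (Ici t) :=
  ENNReal.toReal_pos ((((mem_support_iff_forall x).1 hx) _ (Ioi_mem_nhds htx)).trans_le
    (measure_mono Ioi_subset_Ici_self)).ne' (measure_ne_top μ _)

section NonnegSupport

variable (h0 : ∀ᵐ y ∂μ, 0 ≤ y)
include h0

lemma pow_mul_measureReal_Ici_le_integral_pow {n : ℕ} (hint : Integrable (fun y => y ^ n) μ)
    {t : ℝ} (ht : 0 ≤ t) :
    t ^ n * μ.real (Ici t) ≤ ∫ y, y ^ n ∂μ := by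
  calc t ^ n * μ.real (Ici t) ≤ ∫ y in Ici t, y ^ n ∂μ :=
        setIntegral_ge_of_const_le_real measurableSet_Ici (measure_ne_top μ _)
          (fun y hy => pow_le_pow_left₀ ht hy n) hint.integrableOn
    _ ≤ ∫ y, y ^ n ∂μ := setIntegral_le_integral hint (h0.mono fun y hy => pow_nonneg hy n)

lemma integral_pow_le_of_support_subset_Iic {n : ℕ} (hint : Integrable (fun y => y ^ n) μ)
    {s : ℝ} (hs : μ.support ⊆ Iic s) : ∫ y, y ^ n ∂μ ≤ s ^ n * μ.real univ := by
  calc ∫ y, y ^ n ∂μ ≤ ∫ _, s ^ n ∂μ := by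
        refine integral_mono_ae hint (integrable_const _) ?_
        filter_upwards [support_mem_ae, h0] with y hys hy
        exact pow_le_pow_left₀ hy (hs hys) n
    _ = s ^ n * μ.real univ := by rw [integral_const, smul_eq_mul, mul_comm]

lemma support_subset_Iic_of_integral_pow_le {M R : ℝ} (hM : 0 < M) (hR : 0 ≤ R)
    (hint : ∀ n : ℕ, Integrable (fun y => y ^ n) μ)
    (hgrow : ∀ n : ℕ, ∫ y, y ^ n ∂μ ≤ M * R ^ n) : μ.support ⊆ Iic R := by
  intro x hx
  rw [mem_Iic]
  by_contra! hRx
  obtain ⟨t, hRt, htx⟩ := exists_between hRx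
  have ht : 0 ≤ t := hR.trans hRt.le
  have hc := measureReal_Ici_pos_of_lt_mem_support hx htx
  have hbound : ∀ n : ℕ, (t ^ n * μ.real (Ici t)) ^ (1 / (n : ℝ)) ≤ (R ^ n * M) ^ (1 / (n : ℝ)) :=
    fun n => Real.rpow_le_rpow (by positivity)
      ((pow_mul_measureReal_Ici_le_integral_pow h0 (hint n) ht).trans
        ((hgrow n).trans_eq (mul_comm _ _))) (by positivity)
  exact hRt.not_ge (le_of_tendsto_of_tendsto' (tendsto_pow_mul_rpow_one_div ht hc)
    (tendsto_pow_mul_rpow_one_div hR hM) hbound)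

end NonnegSupport

end MeasureTheory.Measure

/-- If a Stieltjes moment sequence `a n = ∫ x^n dμ` (with `μ` a nonzero positive
measure on `[0,∞)`) has at most exponential growth `a n ≤ M R^n`, then the
exponential growth rate `limsup (a n)^(1/n)` equals the supremum of the support
of `μ`. -/
theorem stieltjes_growth_eq_sSup_support (μ : Measure ℝ) (a : ℕ → ℝ) (M R : ℝ)
    (hM : 0 < M) (hR : 0 < R) (hμ : μ ≠ 0) (hneg : μ (Set.Iio 0) = 0)
    (hint : ∀ n : ℕ, Integrable (fun x => x ^ n) μ)
    (hmom : ∀ n : ℕ, ∫ x, x ^ n ∂μ = a n)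
    (hgrow : ∀ n : ℕ, a n ≤ M * R ^ n) :
    Filter.limsup (fun n : ℕ => (a n) ^ (1 / (n : ℝ))) Filter.atTop
      = sSup {x : ℝ | ∀ ε > 0, 0 < μ (Set.Ioo (x - ε) (x + ε))} := by
  have : IsFiniteMeasure μ :=
    (integrable_const_iff.1 (by simpa using hint 0)).resolve_left one_ne_zero
  have : NeZero μ := ⟨hμ⟩
  have h0 : ∀ᵐ y ∂μ, 0 ≤ y := ae_iff.2 (by simp only [not_le]; exact hneg)
  rw [← Measure.support_eq_setOf_measure_Ioo_pos]
  have hbdd : BddAbove μ.support :=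
    ⟨R, Measure.support_subset_Iic_of_integral_pow_le h0 hM hR.le hint
      fun n => (hmom n).trans_le (hgrow n)⟩
  have hne : μ.support.Nonempty := Measure.nonempty_support hμ
  have hs : 0 ≤ sSup μ.support :=
    (Measure.support_subset_of_isClosed isClosed_Ici h0 hne.some_mem).trans
      (le_csSup hbdd hne.some_mem)
  refine (tendsto_rpow_one_div_of_pow_bounds (C := μ.real univ) (fun n => ?_) hs
    measureReal_univ_pos (fun n => ?_) ?_).limsup_eq
  · exact hmom n ▸ integral_nonneg_of_ae (h0.mono fun y hy => pow_nonneg hy n)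
  · exact hmom n ▸
      Measure.integral_pow_le_of_support_subset_Iic h0 (hint n) fun x hx => le_csSup hbdd hx
  · intro t ht hts
    obtain ⟨x, hx, htx⟩ := exists_lt_of_lt_csSup hne hts
    exact ⟨_, Measure.measureReal_Ici_pos_of_lt_mem_support hx htx,
      fun n => hmom n ▸ Measure.pow_mul_measureReal_Ici_le_integral_pow h0 (hint n) ht⟩
end

section
/- For a probability measure μ on [0, C²] with moments m_n = ∫ x^n dμ, the sequence of lower bounds b_n (defined via truncation of the continued fraction expansion) is nondecreasing and satisfies b_n^n ≥ m_n/m_0, hence b_n converges to the exponential growth rate of (m_n). -/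
open MeasureTheory Filter PowerSeries

/-- The denominator chain of the finite continued fraction. -/
noncomputable def cfD : List ℝ → PowerSeries ℝ
  | [] => 1
  | a :: l => 1 - PowerSeries.C a * PowerSeries.X * (cfD l)⁻¹

/-- `cfA [a₀,…,aₙ] = a₀ / (1 - a₁ t / (⋯ (1 - aₙ t)))`. -/
noncomputable def cfA : List ℝ → PowerSeries ℝ
  | [] => 0
  | a :: l => PowerSeries.C a * (cfD l)⁻¹

/-! The truncations `cfA [α₀, …, αₙ]` have nonnegative coefficients `c n k` that increase with
`n` and equal `m k` for `k ≤ n`. With `α₀ = m 0 = 1`, each `c n` is supermultiplicative: it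
counts weighted lattice paths of bounded height, and paths concatenate. Along multiples of `j`
this gives `c n j ^ (1/j) ≤ b n`, hence `m n = c n n ≤ b n ^ n`, and monotonicity in `n` gives
`b n ≤ b (n+1) ≤ limsup m_k ^ (1/k)`, while `m k ^ (1/k) ≤ b k` forces the limit up to it. -/

lemma constantCoeff_cfD (l : List ℝ) : constantCoeff (cfD l) = 1 := by
  cases l <;> simp [cfD]

lemma coeff_zero_inv_cfD (l : List ℝ) : coeff 0 (cfD l)⁻¹ = 1 := by
  rw [coeff_zero_eq_constantCoeff, constantCoeff_inv, constantCoeff_cfD, inv_one]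

lemma inv_cfD_cons (a : ℝ) (l : List ℝ) :
    (cfD (a :: l))⁻¹ = 1 + C a * (X * ((cfD l)⁻¹ * (cfD (a :: l))⁻¹)) := by
  have h := PowerSeries.mul_inv_cancel (cfD (a :: l)) (by simp [constantCoeff_cfD])
  nth_rewrite 1 [cfD] at h
  linear_combination h

lemma coeff_succ_inv_cfD_cons (a : ℝ) (l : List ℝ) (k : ℕ) :
    coeff (k + 1) (cfD (a :: l))⁻¹ =
      a * ∑ p ∈ Finset.range (k + 1), coeff p (cfD l)⁻¹ * coeff (k - p) (cfD (a :: l))⁻¹ := by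
  conv_lhs => rw [inv_cfD_cons a l]
  rw [map_add, coeff_one, coeff_C_mul, coeff_succ_X_mul, coeff_mul,
    Finset.Nat.sum_antidiagonal_eq_sum_range_succ_mk]
  simp

lemma coeff_inv_cfD_nil_succ (k : ℕ) : coeff (k + 1) (cfD [])⁻¹ = 0 := by
  simp [cfD, coeff_one]

lemma coeff_inv_cfD_nonneg {l : List ℝ} (hl : ∀ x ∈ l, 0 ≤ x) (k : ℕ) :
    0 ≤ coeff k (cfD l)⁻¹ := by
  induction l generalizing k with
  | nil => cases k <;> simp [coeff_zero_inv_cfD, coeff_inv_cfD_nil_succ]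
  | cons a l ih =>
    obtain ⟨ha, hl⟩ := List.forall_mem_cons.1 hl
    induction k using Nat.strong_induction_on with
    | _ k ihk =>
      cases k with
      | zero => simp [coeff_zero_inv_cfD]
      | succ k =>
        rw [coeff_succ_inv_cfD_cons]
        refine mul_nonneg ha (Finset.sum_nonneg fun p _ => ?_)
        exact mul_nonneg (ih hl p) (ihk (k - p) (by omega))

lemma coeff_inv_cfD_le_append {l : List ℝ} (hl : ∀ x ∈ l, 0 ≤ x) {a : ℝ} (ha : 0 ≤ a) (k : ℕ) :
    coeff k (cfD l)⁻¹ ≤ coeff k (cfD (l ++ [a]))⁻¹ := by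
  induction l generalizing k with
  | nil =>
    cases k with
    | zero => simp [coeff_zero_inv_cfD]
    | succ k =>
      rw [coeff_inv_cfD_nil_succ]
      exact coeff_inv_cfD_nonneg (by simpa using ha) _
  | cons c l ih =>
    obtain ⟨hc, hl'⟩ := List.forall_mem_cons.1 hl
    have hla : ∀ x ∈ l ++ [a], 0 ≤ x := List.forall_mem_append.2 ⟨hl', by simpa using ha⟩
    induction k using Nat.strong_induction_on with
    | _ k ihk =>
      cases k with
      | zero => simp [coeff_zero_inv_cfD]
      | succ k =>
        rw [List.cons_append, coeff_succ_inv_cfD_cons, coeff_succ_inv_cfD_cons]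
        refine mul_le_mul_of_nonneg_left (Finset.sum_le_sum fun p _ => ?_) hc
        exact mul_le_mul (ih hl' p) (ihk (k - p) (by omega))
          (coeff_inv_cfD_nonneg hl _) (coeff_inv_cfD_nonneg hla p)

lemma coeff_inv_cfD_mul_le {l : List ℝ} (hl : ∀ x ∈ l, 0 ≤ x) (i j : ℕ) :
    coeff i (cfD l)⁻¹ * coeff j (cfD l)⁻¹ ≤ coeff (i + j) (cfD l)⁻¹ := by
  cases l with
  | nil =>
    cases i with
    | zero => simp [coeff_zero_inv_cfD]
    | succ i => simpa [coeff_inv_cfD_nil_succ] using coeff_inv_cfD_nonneg hl _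
  | cons a l =>
    obtain ⟨ha, hl'⟩ := List.forall_mem_cons.1 hl
    induction i using Nat.strong_induction_on with
    | _ i ihi =>
      cases i with
      | zero => simp [coeff_zero_inv_cfD]
      | succ i =>
        set F := (cfD (a :: l))⁻¹
        set G := (cfD l)⁻¹
        rw [coeff_succ_inv_cfD_cons, show i + 1 + j = i + j + 1 by omega,
          coeff_succ_inv_cfD_cons, mul_assoc, Finset.sum_mul]
        refine mul_le_mul_of_nonneg_left ?_ ha
        calc ∑ p ∈ Finset.range (i + 1), coeff p G * coeff (i - p) F * coeff j F
            ≤ ∑ p ∈ Finset.range (i + 1), coeff p G * coeff (i + j - p) F := by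
              refine Finset.sum_le_sum fun p hp => ?_
              rw [Finset.mem_range] at hp
              rw [mul_assoc, show i + j - p = i - p + j by omega]
              exact mul_le_mul_of_nonneg_left (ihi (i - p) (by omega))
                (coeff_inv_cfD_nonneg hl' p)
          _ ≤ ∑ p ∈ Finset.range (i + j + 1), coeff p G * coeff (i + j - p) F :=
              Finset.sum_le_sum_of_subset_of_nonneg (Finset.range_subset_range.2 (by omega))
                fun p _ _ => mul_nonneg (coeff_inv_cfD_nonneg hl' p)
                  (coeff_inv_cfD_nonneg hl _)

lemma coeff_cfA_ofFn (α : ℕ → ℝ) (n k : ℕ) :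
    coeff k (cfA (List.ofFn fun i : Fin (n + 1) => α i)) =
      α 0 * coeff k (cfD (List.ofFn fun i : Fin n => α (i + 1)))⁻¹ := by
  simp [List.ofFn_succ, cfA, coeff_C_mul]

lemma ofFn_succ_eq_append {β : Type*} (f : ℕ → β) (n : ℕ) :
    (List.ofFn fun i : Fin (n + 1) => f i) = (List.ofFn fun i : Fin n => f i) ++ [f n] := by
  rw [List.ofFn_succ']
  simp [List.concat_eq_append]

noncomputable def limsupRoot (c : ℕ → ℝ) : ℝ := limsup (fun k : ℕ => c k ^ (1 / (k : ℝ))) atTop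

section LimsupRoot

variable {c d : ℕ → ℝ}

lemma isBoundedUnder_root_of_le_pow {R : ℝ} (hR : 0 ≤ R) (hc : ∀ k, 0 ≤ c k)
    (hcR : ∀ k, c k ≤ R ^ k) :
    IsBoundedUnder (· ≤ ·) atTop fun k : ℕ => c k ^ (1 / (k : ℝ)) := by
  refine isBoundedUnder_of_eventually_le (a := R) ?_
  filter_upwards [eventually_ne_atTop 0] with k hk
  calc c k ^ (1 / (k : ℝ)) ≤ (R ^ k) ^ (1 / (k : ℝ)) :=
        Real.rpow_le_rpow (hc k) (hcR k) (by positivity)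
    _ = R := by rw [one_div, Real.pow_rpow_inv_natCast hR hk]

lemma isBoundedUnder_root_of_le (hc : ∀ k, 0 ≤ c k) (hcd : ∀ k, c k ≤ d k)
    (hd : IsBoundedUnder (· ≤ ·) atTop fun k : ℕ => d k ^ (1 / (k : ℝ))) :
    IsBoundedUnder (· ≤ ·) atTop fun k : ℕ => c k ^ (1 / (k : ℝ)) :=
  hd.mono_le (Eventually.of_forall fun k => Real.rpow_le_rpow (hc k) (hcd k) (by positivity))

lemma limsupRoot_mono (hc : ∀ k, 0 ≤ c k) (hcd : ∀ k, c k ≤ d k)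
    (hd : IsBoundedUnder (· ≤ ·) atTop fun k : ℕ => d k ^ (1 / (k : ℝ))) :
    limsupRoot c ≤ limsupRoot d :=
  limsup_le_limsup (Eventually.of_forall fun k => Real.rpow_le_rpow (hc k) (hcd k) (by positivity))
    (isCoboundedUnder_le_of_le atTop fun k => Real.rpow_nonneg (hc k) _) hd

lemma pow_succ_le_of_supermul (hc : ∀ k, 0 ≤ c k) (hsup : ∀ i j, c i * c j ≤ c (i + j))
    (j q : ℕ) : c j ^ (q + 1) ≤ c ((q + 1) * j) := by
  induction q with
  | zero => simp
  | succ q ih =>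
    calc c j ^ (q + 2) = c j ^ (q + 1) * c j := pow_succ _ _
      _ ≤ c ((q + 1) * j) * c j := mul_le_mul_of_nonneg_right ih (hc j)
      _ ≤ c ((q + 2) * j) := by rw [show (q + 2) * j = (q + 1) * j + j by ring]; exact hsup _ _

/-- Fekete-type bound: along the multiples `(q + 1) * j` the roots of `c` stay above
`c j ^ (1 / j)`. -/
lemma root_le_limsupRoot (hc : ∀ k, 0 ≤ c k) (hsup : ∀ i j, c i * c j ≤ c (i + j))
    (hbdd : IsBoundedUnder (· ≤ ·) atTop fun k : ℕ => c k ^ (1 / (k : ℝ))) {j : ℕ} (hj : j ≠ 0) :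
    c j ^ (1 / (j : ℝ)) ≤ limsupRoot c := by
  refine le_limsup_of_frequently_le (frequently_atTop.2 fun N => ⟨(N + 1) * j, ?_, ?_⟩) hbdd
  · nlinarith [Nat.one_le_iff_ne_zero.2 hj]
  · calc c j ^ (1 / (j : ℝ)) = (c j ^ (N + 1)) ^ (1 / (((N + 1) * j : ℕ) : ℝ)) := by
          rw [← Real.rpow_natCast, ← Real.rpow_mul (hc j)]
          congr 1
          push_cast
          field_simp
      _ ≤ c ((N + 1) * j) ^ (1 / (((N + 1) * j : ℕ) : ℝ)) :=
          Real.rpow_le_rpow (pow_nonneg (hc j) _) (pow_succ_le_of_supermul hc hsup j N)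
            (by positivity)

lemma le_limsupRoot_pow (hc : ∀ k, 0 ≤ c k) (hsup : ∀ i j, c i * c j ≤ c (i + j))
    (hbdd : IsBoundedUnder (· ≤ ·) atTop fun k : ℕ => c k ^ (1 / (k : ℝ))) (n : ℕ) :
    c n ≤ limsupRoot c ^ n := by
  rcases eq_or_ne n 0 with rfl | hn
  · nlinarith [hsup 0 0, hc 0]
  · calc c n = (c n ^ (1 / (n : ℝ))) ^ n := by rw [one_div, Real.rpow_inv_natCast_pow (hc n) hn]
      _ ≤ limsupRoot c ^ n :=
          pow_le_pow_left₀ (Real.rpow_nonneg (hc n) _) (root_le_limsupRoot hc hsup hbdd hn) n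

end LimsupRoot

section Truncations

variable {c : ℕ → ℕ → ℝ} {m : ℕ → ℝ}

lemma le_of_monotone_of_eq (hmono : ∀ k, Monotone fun n => c n k)
    (hcm : ∀ n k, k ≤ n → c n k = m k) (n k : ℕ) : c n k ≤ m k :=
  (hmono k (le_max_left n k)).trans (hcm _ _ (le_max_right n k)).le

lemma monotone_limsupRoot (hc : ∀ n k, 0 ≤ c n k) (hmono : ∀ k, Monotone fun n => c n k)
    (hcm : ∀ n k, k ≤ n → c n k = m k)
    (hm : IsBoundedUnder (· ≤ ·) atTop fun k : ℕ => m k ^ (1 / (k : ℝ))) :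
    Monotone fun n => limsupRoot (c n) := fun n n' h =>
  limsupRoot_mono (hc n) (fun k => hmono k h)
    (isBoundedUnder_root_of_le (hc n') (le_of_monotone_of_eq hmono hcm n') hm)

lemma tendsto_limsupRoot (hc : ∀ n k, 0 ≤ c n k) (hmono : ∀ k, Monotone fun n => c n k)
    (hsup : ∀ n i j, c n i * c n j ≤ c n (i + j)) (hcm : ∀ n k, k ≤ n → c n k = m k)
    (hm : IsBoundedUnder (· ≤ ·) atTop fun k : ℕ => m k ^ (1 / (k : ℝ))) :
    Tendsto (fun n => limsupRoot (c n)) atTop (nhds (limsupRoot m)) := by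
  have hcm_le := le_of_monotone_of_eq hmono hcm
  have hbdd n := isBoundedUnder_root_of_le (hc n) (hcm_le n) hm
  have hle n : limsupRoot (c n) ≤ limsupRoot m := limsupRoot_mono (hc n) (hcm_le n) hm
  have hbddAbove : BddAbove (Set.range fun n => limsupRoot (c n)) := ⟨_, Set.forall_mem_range.2 hle⟩
  suffices h : limsupRoot m ≤ ⨆ n, limsupRoot (c n) by
    rw [← le_antisymm (ciSup_le hle) h]
    exact tendsto_atTop_ciSup (monotone_limsupRoot hc hmono hcm hm) hbddAbove
  refine limsup_le_of_le (isCoboundedUnder_le_of_le atTop fun k =>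
    Real.rpow_nonneg (hcm k k le_rfl ▸ hc k k) _) ?_
  filter_upwards [eventually_ne_atTop 0] with k hk
  calc m k ^ (1 / (k : ℝ)) = c k k ^ (1 / (k : ℝ)) := by rw [hcm k k le_rfl]
    _ ≤ limsupRoot (c k) := root_le_limsupRoot (hc k) (hsup k) (hbdd k) hk
    _ ≤ ⨆ n, limsupRoot (c n) := le_ciSup hbddAbove k

end Truncations

lemma integral_pow_le_of_ae_mem_Icc {μ : Measure ℝ} [IsProbabilityMeasure μ] {R : ℝ}
    (hμ : ∀ᵐ x ∂μ, x ∈ Set.Icc 0 R) (n : ℕ) : ∫ x, x ^ n ∂μ ≤ R ^ n := by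
  calc ∫ x, x ^ n ∂μ ≤ ∫ _, R ^ n ∂μ :=
        integral_mono_of_nonneg (hμ.mono fun x hx => pow_nonneg hx.1 n) (integrable_const _)
          (hμ.mono fun x hx => pow_le_pow_left₀ hx.1 hx.2 n)
    _ = R ^ n := by simp

theorem cf_lower_bounds_general (μ : Measure ℝ) [IsProbabilityMeasure μ] (C : ℝ)
    (hsupp : μ (Set.Icc 0 (C ^ 2))ᶜ = 0)
    (m : ℕ → ℝ)
    (hm : ∀ n : ℕ, m n = ∫ x, x ^ n ∂μ)
    (α : ℕ → ℝ) (hα : ∀ j, 0 ≤ α j)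
    (hcf : ∀ n k : ℕ, k ≤ n →
      PowerSeries.coeff k (cfA (List.ofFn fun i : Fin (n + 1) => α i)) = m k)
    (b : ℕ → ℝ)
    (hb : ∀ n, b n = Filter.limsup
      (fun k : ℕ =>
        |PowerSeries.coeff k (cfA (List.ofFn fun i : Fin (n + 1) => α i))| ^ (1 / (k : ℝ)))
      Filter.atTop) :
    Monotone b ∧ (∀ n : ℕ, m n / m 0 ≤ (b n) ^ n) ∧
      Filter.Tendsto b Filter.atTop
        (nhds (Filter.limsup (fun n : ℕ => (m n) ^ (1 / (n : ℝ))) Filter.atTop)) := by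
  have hm0 : m 0 = 1 := by simp [hm]
  have hα0 : α 0 = 1 := by
    simpa only [coeff_cfA_ofFn, coeff_zero_inv_cfD, mul_one, hm0] using hcf 0 0 le_rfl
  set c : ℕ → ℕ → ℝ := fun n k => coeff k (cfD (List.ofFn fun i : Fin n => α (i + 1)))⁻¹
  have hαl n : ∀ x ∈ List.ofFn fun i : Fin n => α (i + 1), 0 ≤ x :=
    List.forall_mem_ofFn_iff.2 fun _ => hα _
  have hc n k : 0 ≤ c n k := coeff_inv_cfD_nonneg (hαl n) k
  have hmono k : Monotone fun n => c n k := monotone_nat_of_le_succ fun n => by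
    simpa only [c, ofFn_succ_eq_append fun i => α (i + 1)] using
      coeff_inv_cfD_le_append (hαl n) (hα (n + 1)) k
  have hsup n i j : c n i * c n j ≤ c n (i + j) := coeff_inv_cfD_mul_le (hαl n) i j
  have hcm n k (hk : k ≤ n) : c n k = m k := by rw [← hcf n k hk, coeff_cfA_ofFn, hα0, one_mul]
  have hmbdd := isBoundedUnder_root_of_le_pow (sq_nonneg C)
    (fun k => hcm k k le_rfl ▸ hc k k)
    (fun k => hm k ▸ integral_pow_le_of_ae_mem_Icc (mem_ae_iff.2 hsupp) k)
  obtain rfl : b = fun n => limsupRoot (c n) := funext fun n => by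
    simp only [hb, limsupRoot, coeff_cfA_ofFn, hα0, one_mul, abs_of_nonneg (hc n _), c]
  refine ⟨monotone_limsupRoot hc hmono hcm hmbdd, fun n => ?_,
    tendsto_limsupRoot hc hmono hsup hcm hmbdd⟩
  rw [hm0, div_one, ← hcm n n le_rfl]
  exact le_limsupRoot_pow (hc n) (hsup n)
    (isBoundedUnder_root_of_le (hc n) (le_of_monotone_of_eq hmono hcm n) hmbdd) n

/-- For a probability measure `μ` on `[0,C²]` with moments `m n`, whose moment
generating series has Stieltjes continued fraction coefficients `α`, the lower
bounds `b n` (exponential growth rate of the truncated continued fraction) form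
a nondecreasing sequence with `b n ^ n ≥ m n / m 0`, converging to the
exponential growth rate of the moment sequence. -/
theorem cf_lower_bounds (μ : Measure ℝ) [IsProbabilityMeasure μ] (C : ℝ) (hC : 0 < C)
    (hsupp : μ (Set.Icc 0 (C ^ 2))ᶜ = 0)
    (m : ℕ → ℝ) (hint : ∀ n : ℕ, Integrable (fun x => x ^ n) μ)
    (hm : ∀ n : ℕ, m n = ∫ x, x ^ n ∂μ)
    (α : ℕ → ℝ) (hα : ∀ j, 0 ≤ α j)
    (hcf : ∀ n k : ℕ, k ≤ n →
      PowerSeries.coeff k (cfA (List.ofFn fun i : Fin (n + 1) => α i)) = m k)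
    (b : ℕ → ℝ)
    (hb : ∀ n, b n = Filter.limsup
      (fun k : ℕ =>
        |PowerSeries.coeff k (cfA (List.ofFn fun i : Fin (n + 1) => α i))| ^ (1 / (k : ℝ)))
      Filter.atTop) :
    Monotone b ∧ (∀ n : ℕ, m n / m 0 ≤ (b n) ^ n) ∧
      Filter.Tendsto b Filter.atTop
        (nhds (Filter.limsup (fun n : ℕ => (m n) ^ (1 / (n : ℝ))) Filter.atTop)) :=
  cf_lower_bounds_general μ C hsupp m hm α hα hcf b hb
end

section
/- If a_n = c · μ^n · κ^{n^σ} · n^g with μ > 0, 0 < κ < 1, 0 < σ < 1, then the modified ratio r_n^{(1)} = n r_n − (n−1) r_{n−1}, where r_n = a_n/a_{n−1}, satisfies r_n^{(1)} = μ(1 + σ² log(κ) n^{σ−1} + o(n^{σ-1}) + o(1/n)); in particular the O(1/n) term (coming from n^g) is eliminated. -/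
/-!
Writing `a n = cst * μ ^ n * exp (h n)` with `h x = log κ * x ^ σ + g * log x` gives
`r n = μ * exp (h n - h (n - 1))`, and then
`r1 n / μ - 1 = exp u * (exp d - 1) * n + (exp u - 1)`, where `u = h (n-1) - h (n-2)` and
`d = h n - 2 h (n-1) + h (n-2)` are a first and a second backward difference of `h`.
Since `exp v - 1 ~ v` as `v → 0`, it suffices that `u * n ^ (1-σ) → σ log κ` and
`d * n ^ (2-σ) → σ (σ-1) log κ`, which add up to `σ² log κ`. With `t = 1/n`, the identities
`(n - k) ^ σ = n ^ σ (1 - k t) ^ σ` and `log (n - k) = log n + log (1 - k t)` turn these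
differences into first and second differences at `0` of `(1 - t) ^ σ` and `log (1 - t)`, which
are governed by their first and second derivatives at `0`. The `log` part of `h` (the factor
`n ^ g`) only contributes `O (1/n)` to `u` and `O (1/n²)` to `d`, which is negligible at the
scales `n ^ (σ-1)` and `n ^ (σ-2)` because `σ > 0`.
-/

open Filter Real Topology Asymptotics

lemma tendsto_mul_comp_inv_atTop {F : ℝ → ℝ} {c : ℝ} (hF : HasDerivAt F c 0) (h0 : F 0 = 0) :
    Tendsto (fun x : ℝ => x * F x⁻¹) atTop (𝓝 c) :=
  (hF.tendsto_slope_zero_right.comp tendsto_inv_atTop_nhdsGT_zero).congr fun x => by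
    simp [h0]

lemma tendsto_div_sq_nhdsGT_zero {F F' : ℝ → ℝ} {c : ℝ}
    (hF : ∀ᶠ t in 𝓝 0, HasDerivAt F (F' t) t) (hF' : HasDerivAt F' c 0)
    (h0 : F 0 = 0) (h0' : F' 0 = 0) :
    Tendsto (fun t : ℝ => F t / t ^ 2) (𝓝[>] 0) (𝓝 (c / 2)) := by
  have hcont : Tendsto F (𝓝[>] 0) (𝓝 0) := by
    simpa [h0] using hF.self_of_nhds.continuousAt.tendsto.mono_left nhdsWithin_le_nhds
  have hsq : Tendsto (fun t : ℝ => t ^ 2) (𝓝[>] 0) (𝓝 0) :=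
    ((continuous_pow 2).tendsto' (0 : ℝ) 0 (by simp)).mono_left nhdsWithin_le_nhds
  have hsq' : ∀ᶠ t : ℝ in 𝓝[>] 0, 2 * t ≠ 0 :=
    eventually_mem_nhdsWithin.mono fun t ht => by simpa using ht.ne'
  refine HasDerivAt.lhopital_zero_nhdsGT (nhdsWithin_le_nhds hF)
    (Eventually.of_forall fun t => by simpa using hasDerivAt_pow 2 t) hsq' hcont hsq ?_
  refine (hF'.tendsto_slope_zero_right.div_const 2).congr fun t => ?_
  simp only [zero_add, h0', sub_zero, smul_eq_mul]
  ring

lemma tendsto_sq_mul_comp_inv_atTop {F F' : ℝ → ℝ} {c : ℝ}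
    (hF : ∀ᶠ t in 𝓝 0, HasDerivAt F (F' t) t) (hF' : HasDerivAt F' c 0)
    (h0 : F 0 = 0) (h0' : F' 0 = 0) :
    Tendsto (fun x : ℝ => x ^ 2 * F x⁻¹) atTop (𝓝 (c / 2)) :=
  ((tendsto_div_sq_nhdsGT_zero hF hF' h0 h0').comp tendsto_inv_atTop_nhdsGT_zero).congr
    fun x => by simp [div_eq_mul_inv, mul_comm]

lemma HasDerivAt.comp_two_mul {q : ℝ → ℝ} {q' t : ℝ} (hq : HasDerivAt q q' (2 * t)) :
    HasDerivAt (fun s => q (2 * s)) (2 * q') t :=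
  (hq.comp t ((hasDerivAt_id t).const_mul 2)).congr_deriv (by ring)

lemma tendsto_mul_first_diff_comp_inv {q : ℝ → ℝ} {q₀ : ℝ} (hq : HasDerivAt q q₀ 0) :
    Tendsto (fun x : ℝ => x * (q x⁻¹ - q (2 * x⁻¹))) atTop (𝓝 (-q₀)) := by
  have hF := hq.sub (HasDerivAt.comp_two_mul (by rwa [mul_zero]))
  rw [show q₀ - 2 * q₀ = -q₀ by ring] at hF
  exact tendsto_mul_comp_inv_atTop hF (by simp)

lemma tendsto_sq_mul_second_diff_comp_inv {q q' : ℝ → ℝ} {c : ℝ}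
    (hq : ∀ᶠ t in 𝓝 0, HasDerivAt q (q' t) t) (hq' : HasDerivAt q' c 0) :
    Tendsto (fun x : ℝ => x ^ 2 * (q 0 - 2 * q x⁻¹ + q (2 * x⁻¹))) atTop (𝓝 c) := by
  have h2 : ∀ᶠ t in 𝓝 (0 : ℝ), HasDerivAt q (q' (2 * t)) (2 * t) :=
    ((continuous_const_mul 2).tendsto' 0 0 (mul_zero 2)).eventually hq
  have hF : ∀ᶠ t in 𝓝 (0 : ℝ), HasDerivAt (fun s => q 0 - 2 * q s + q (2 * s))
      (2 * (q' (2 * t) - q' t)) t := by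
    filter_upwards [hq, h2] with t h1 h2
    exact (((h1.const_mul 2).const_sub (q 0)).add h2.comp_two_mul).congr_deriv (by ring)
  have hF' : HasDerivAt (fun t => 2 * (q' (2 * t) - q' t)) (2 * c) 0 :=
    (((HasDerivAt.comp_two_mul (by rwa [mul_zero])).sub hq').const_mul 2).congr_deriv (by ring)
  simpa using tendsto_sq_mul_comp_inv_atTop hF hF' (by norm_num; ring) (by simp)

lemma hasDerivAt_one_sub_rpow (p : ℝ) {s : ℝ} (hs : s ≠ 1) :
    HasDerivAt (fun t => (1 - t) ^ p) (-(p * (1 - s) ^ (p - 1))) s :=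
  (((hasDerivAt_id s).const_sub 1).rpow_const (Or.inl (sub_ne_zero.2 hs.symm))).congr_deriv
    (by simp)

lemma hasDerivAt_log_one_sub {s : ℝ} (hs : s ≠ 1) :
    HasDerivAt (fun t => log (1 - t)) (-(1 - s)⁻¹) s :=
  (((hasDerivAt_id s).const_sub 1).log (sub_ne_zero.2 hs.symm)).congr_deriv
    (by simp [div_eq_mul_inv])

lemma hasDerivAt_neg_one_sub_inv_zero :
    HasDerivAt (fun t => -(1 - t)⁻¹) (-1) (0 : ℝ) :=
  (((hasDerivAt_id (0 : ℝ)).const_sub 1).inv (by norm_num)).neg.congr_deriv (by simp)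

lemma sub_rpow_eq_mul {x k : ℝ} (hx : 0 < x) (hk : k ≤ x) (p : ℝ) :
    (x - k) ^ p = x ^ p * (1 - k * x⁻¹) ^ p := by
  have hk' : k * x⁻¹ ≤ 1 := by rwa [← div_eq_mul_inv, div_le_one hx]
  rw [← mul_rpow hx.le (sub_nonneg.2 hk')]
  field_simp

lemma log_sub_eq_add {x k : ℝ} (hx : 0 < x) (hk : k < x) :
    log (x - k) = log x + log (1 - k * x⁻¹) := by
  have hk' : k * x⁻¹ < 1 := by rwa [← div_eq_mul_inv, div_lt_one hx]
  rw [← log_mul hx.ne' (sub_ne_zero.2 hk'.ne')]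
  field_simp

lemma tendsto_rpow_first_diff (σ : ℝ) :
    Tendsto (fun x : ℝ => ((x - 1) ^ σ - (x - 2) ^ σ) * x ^ (1 - σ)) atTop (𝓝 σ) := by
  have h := tendsto_mul_first_diff_comp_inv (hasDerivAt_one_sub_rpow σ zero_ne_one)
  simp only [sub_zero, one_rpow, mul_one, neg_neg] at h
  refine h.congr' ?_
  filter_upwards [eventually_ge_atTop 2] with x hx
  have hx0 : 0 < x := by linarith
  rw [sub_rpow_eq_mul hx0 (by linarith) σ, sub_rpow_eq_mul hx0 hx σ, one_mul, rpow_sub hx0,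
    rpow_one]
  field_simp

lemma tendsto_rpow_second_diff (σ : ℝ) :
    Tendsto (fun x : ℝ => (x ^ σ - 2 * (x - 1) ^ σ + (x - 2) ^ σ) * x ^ (2 - σ)) atTop
      (𝓝 (σ * (σ - 1))) := by
  have hq : ∀ᶠ s in 𝓝 (0 : ℝ), HasDerivAt (fun t => (1 - t) ^ σ) (-(σ * (1 - s) ^ (σ - 1))) s :=
    (eventually_ne_nhds zero_ne_one).mono fun s hs => hasDerivAt_one_sub_rpow σ hs
  have hq' := ((hasDerivAt_one_sub_rpow (σ - 1) zero_ne_one).const_mul σ).neg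
  have h := tendsto_sq_mul_second_diff_comp_inv hq hq'
  simp only [sub_zero, one_rpow, mul_one] at h
  rw [show -(σ * -(σ - 1)) = σ * (σ - 1) by ring] at h
  refine h.congr' ?_
  filter_upwards [eventually_ge_atTop 2] with x hx
  have hx0 : 0 < x := by linarith
  rw [sub_rpow_eq_mul hx0 (by linarith) σ, sub_rpow_eq_mul hx0 hx σ, one_mul, rpow_sub hx0,
    rpow_two]
  field_simp

lemma tendsto_log_first_diff :
    Tendsto (fun x : ℝ => (log (x - 1) - log (x - 2)) * x) atTop (𝓝 1) := by
  have h := tendsto_mul_first_diff_comp_inv (hasDerivAt_log_one_sub (zero_ne_one' ℝ))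
  simp only [sub_zero, inv_one, neg_neg] at h
  refine h.congr' ?_
  filter_upwards [eventually_gt_atTop 2] with x hx
  have hx0 : 0 < x := by linarith
  rw [log_sub_eq_add hx0 (by linarith), log_sub_eq_add hx0 hx, one_mul]
  ring

lemma tendsto_log_second_diff :
    Tendsto (fun x : ℝ => (log x - 2 * log (x - 1) + log (x - 2)) * x ^ 2) atTop (𝓝 (-1)) := by
  have hq : ∀ᶠ s in 𝓝 (0 : ℝ), HasDerivAt (fun t => log (1 - t)) (-(1 - s)⁻¹) s :=
    (eventually_ne_nhds zero_ne_one).mono fun s hs => hasDerivAt_log_one_sub hs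
  have h := tendsto_sq_mul_second_diff_comp_inv hq hasDerivAt_neg_one_sub_inv_zero
  refine h.congr' ?_
  filter_upwards [eventually_gt_atTop 2] with x hx
  have hx0 : 0 < x := by linarith
  rw [log_sub_eq_add hx0 (by linarith), log_sub_eq_add hx0 hx, one_mul, sub_zero, log_one]
  ring

lemma isEquivalent_exp_sub_one : (fun y => exp y - 1) ~[𝓝 0] id := by
  have h := (hasDerivAt_exp 0).isLittleO
  simp only [exp_zero, sub_zero, smul_eq_mul, mul_one] at h
  exact h.isEquivalent

lemma tendsto_exp_sub_one_mul {α : Type*} {l : Filter α} {u v : α → ℝ} {a : ℝ}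
    (hu : Tendsto u l (𝓝 0)) (huv : Tendsto (fun x => u x * v x) l (𝓝 a)) :
    Tendsto (fun x => (exp (u x) - 1) * v x) l (𝓝 a) :=
  ((isEquivalent_exp_sub_one.comp_tendsto hu).mul (IsEquivalent.refl (u := v))).symm.tendsto_nhds
    huv

lemma tendsto_zero_of_tendsto_mul_atTop {α : Type*} {l : Filter α} {u w : α → ℝ} {a : ℝ}
    (hw : Tendsto w l atTop) (huw : Tendsto (fun x => u x * w x) l (𝓝 a)) :
    Tendsto u l (𝓝 0) :=
  (huw.div_atTop hw).congr' <| (hw.eventually_gt_atTop 0).mono fun _ hx =>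
    mul_div_cancel_right₀ _ hx.ne'

lemma tendsto_modified_ratio {h w : ℝ → ℝ} {α β : ℝ} (hw : Tendsto w atTop atTop)
    (hA : Tendsto (fun x => (h (x - 1) - h (x - 2)) * w x) atTop (𝓝 α))
    (hB : Tendsto (fun x => (h x - 2 * h (x - 1) + h (x - 2)) * (x * w x)) atTop (𝓝 β)) :
    Tendsto (fun x => (x * exp (h x - h (x - 1)) - (x - 1) * exp (h (x - 1) - h (x - 2)) - 1)
      * w x) atTop (𝓝 (α + β)) := by
  have hu := tendsto_zero_of_tendsto_mul_atTop hw hA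
  have hd := tendsto_zero_of_tendsto_mul_atTop (tendsto_id.atTop_mul_atTop₀ hw) hB
  have hexp := hu.rexp
  rw [exp_zero] at hexp
  have hlim := (hexp.mul (tendsto_exp_sub_one_mul hd hB)).add (tendsto_exp_sub_one_mul hu hA)
  rw [one_mul, add_comm β] at hlim
  refine hlim.congr fun x => ?_
  have hsplit : exp (h x - h (x - 1))
      = exp (h x - 2 * h (x - 1) + h (x - 2)) * exp (h (x - 1) - h (x - 2)) := by
    rw [← exp_add]; ring_nf
  rw [hsplit]
  ring

section RpowAddLog

variable {σ : ℝ} (L g : ℝ)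

lemma tendsto_rpow_add_log_first_diff (hσ : 0 < σ) :
    Tendsto (fun x : ℝ => (L * (x - 1) ^ σ + g * log (x - 1)
      - (L * (x - 2) ^ σ + g * log (x - 2))) * x ^ (1 - σ)) atTop (𝓝 (σ * L)) := by
  have hlim := ((tendsto_rpow_first_diff σ).const_mul L).add
    ((tendsto_log_first_diff.mul (tendsto_rpow_neg_atTop hσ)).const_mul g)
  rw [mul_zero, mul_zero, add_zero, mul_comm] at hlim
  refine hlim.congr' ?_
  filter_upwards [eventually_gt_atTop 0] with x hx
  rw [rpow_sub hx, rpow_neg hx.le, rpow_one]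
  ring

lemma tendsto_rpow_add_log_second_diff (hσ : 0 < σ) :
    Tendsto (fun x : ℝ => (L * x ^ σ + g * log x - 2 * (L * (x - 1) ^ σ + g * log (x - 1))
      + (L * (x - 2) ^ σ + g * log (x - 2))) * (x * x ^ (1 - σ))) atTop
      (𝓝 (σ * (σ - 1) * L)) := by
  have hlim := ((tendsto_rpow_second_diff σ).const_mul L).add
    ((tendsto_log_second_diff.mul (tendsto_rpow_neg_atTop hσ)).const_mul g)
  rw [mul_zero, mul_zero, add_zero, mul_comm] at hlim
  refine hlim.congr' ?_
  filter_upwards [eventually_gt_atTop 0] with x hx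
  rw [rpow_sub hx, rpow_sub hx, rpow_neg hx.le, rpow_one, rpow_two]
  ring

end RpowAddLog

lemma rpow_rpow_mul_rpow_eq_exp {κ x : ℝ} (hκ : 0 < κ) (hx : 0 < x) (σ g : ℝ) :
    κ ^ x ^ σ * x ^ g = exp (log κ * x ^ σ + g * log x) := by
  rw [rpow_def_of_pos hκ, rpow_def_of_pos hx g, exp_add, mul_comm (log x)]

lemma modified_ratio_eq_of_eq_mul_exp {a r r1 : ℕ → ℝ} {C μ : ℝ} {h : ℝ → ℝ} (hC : C ≠ 0)
    (hμ : μ ≠ 0) (ha : ∀ n : ℕ, 1 ≤ n → a n = C * μ ^ n * exp (h n))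
    (hr : ∀ n, r n = a n / a (n - 1))
    (hr1 : ∀ n, r1 n = (n : ℝ) * r n - ((n : ℝ) - 1) * r (n - 1)) {n : ℕ} (hn : 3 ≤ n) :
    r1 n = μ * ((n : ℝ) * exp (h n - h (n - 1)) - ((n : ℝ) - 1) * exp (h (n - 1) - h (n - 2))) := by
  have hratio : ∀ m : ℕ, 1 ≤ m → r (m + 1) = μ * exp (h (m + 1) - h m) := fun m hm => by
    rw [hr, Nat.add_sub_cancel, ha _ (by omega), ha m hm, Nat.cast_succ, exp_sub]
    field_simp
    ring
  obtain ⟨m, rfl⟩ : ∃ m, n = m + 2 := ⟨n - 2, by omega⟩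
  rw [hr1, show m + 2 - 1 = m + 1 by omega, hratio _ (by omega), hratio m (by omega)]
  push_cast
  ring_nf

theorem modified_ratio_asymptotics_general (a : ℕ → ℝ) (cst μ κ σ g : ℝ)
    (hcst : 0 < cst) (hμ : 0 < μ) (hκ0 : 0 < κ)
    (hσ0 : 0 < σ) (hσ1 : σ < 1)
    (ha : ∀ n : ℕ, 1 ≤ n → a n = cst * μ ^ n * κ ^ ((n : ℝ) ^ σ) * (n : ℝ) ^ g)
    (r : ℕ → ℝ) (hr : ∀ n, r n = a n / a (n - 1))
    (r1 : ℕ → ℝ) (hr1 : ∀ n, r1 n = (n : ℝ) * r n - ((n : ℝ) - 1) * r (n - 1)) :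
    ∃ e : ℕ → ℝ,
      (∀ n : ℕ, 3 ≤ n →
        r1 n = μ * (1 + σ ^ 2 * Real.log κ * (n : ℝ) ^ (σ - 1) + e n)) ∧
      Filter.Tendsto (fun n : ℕ => e n / (n : ℝ) ^ (σ - 1)) Filter.atTop (nhds 0) := by
  set h : ℝ → ℝ := fun x => log κ * x ^ σ + g * log x
  have ha' : ∀ n : ℕ, 1 ≤ n → a n = cst * μ ^ n * exp (h n) := fun n hn => by
    rw [ha n hn, mul_assoc _ (κ ^ _), rpow_rpow_mul_rpow_eq_exp hκ0 (by positivity)]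
  refine ⟨fun n => r1 n / μ - 1 - σ ^ 2 * log κ * (n : ℝ) ^ (σ - 1),
    fun n _ => by field_simp; ring, ?_⟩
  have hlim := ((tendsto_modified_ratio (tendsto_rpow_atTop (sub_pos.2 hσ1))
    (tendsto_rpow_add_log_first_diff (log κ) g hσ0)
    (tendsto_rpow_add_log_second_diff (log κ) g hσ0)).comp tendsto_natCast_atTop_atTop).sub_const
    (σ ^ 2 * log κ)
  rw [show σ * log κ + σ * (σ - 1) * log κ - σ ^ 2 * log κ = 0 by ring] at hlim
  refine hlim.congr' ?_
  filter_upwards [eventually_ge_atTop 3] with n hn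
  have hn0 : (0 : ℝ) < n := by positivity
  rw [Function.comp_apply, modified_ratio_eq_of_eq_mul_exp hcst.ne' hμ.ne' ha' hr hr1 hn,
    rpow_sub hn0, rpow_sub hn0, rpow_one]
  field_simp
  ring

/-- If `a n = c · μ^n · κ^(n^σ) · n^g` with `μ > 0`, `0 < κ < 1`, `0 < σ < 1`,
then the modified ratio `r¹ n = n·r n − (n−1)·r (n−1)`, where `r n = a n / a (n-1)`,
satisfies `r¹ n = μ (1 + σ² log κ · n^(σ−1) + o(n^(σ−1)))`; in particular the
`O(1/n)` term coming from `n^g` is eliminated. -/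
theorem modified_ratio_asymptotics (a : ℕ → ℝ) (cst μ κ σ g : ℝ)
    (hcst : 0 < cst) (hμ : 0 < μ) (hκ0 : 0 < κ) (hκ1 : κ < 1)
    (hσ0 : 0 < σ) (hσ1 : σ < 1)
    (ha : ∀ n : ℕ, 1 ≤ n → a n = cst * μ ^ n * κ ^ ((n : ℝ) ^ σ) * (n : ℝ) ^ g)
    (r : ℕ → ℝ) (hr : ∀ n, r n = a n / a (n - 1))
    (r1 : ℕ → ℝ) (hr1 : ∀ n, r1 n = (n : ℝ) * r n - ((n : ℝ) - 1) * r (n - 1)) :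
    ∃ e : ℕ → ℝ,
      (∀ n : ℕ, 3 ≤ n →
        r1 n = μ * (1 + σ ^ 2 * Real.log κ * (n : ℝ) ^ (σ - 1) + e n)) ∧
      Filter.Tendsto (fun n : ℕ => e n / (n : ℝ) ^ (σ - 1)) Filter.atTop (nhds 0) :=
  modified_ratio_asymptotics_general a cst μ κ σ g hcst hμ hκ0 hσ0 hσ1 ha r hr r1 hr1
end
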